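/- The series of H(k)^2/(k+1)^2 over positive integers k converges to (11/4)ζ(4). -/

import Mathlib

open scoped BigOperators

/-- The harmonic number `H k = ∑_{j=1}^k 1/j`. -/
noncomputable def H (k : ℕ) : ℝ := ∑ j ∈ Finset.Icc 1 k, (1 : ℝ) / j

/-- The generalized harmonic number `H^{(p)} k = ∑_{j=1}^k 1/j^p`. -/
noncomputable def Hgen (p k : ℕ) : ℝ := ∑ j ∈ Finset.Icc 1 k, (1 : ℝ) / (j : ℝ) ^ p

/-!
Writing `H(k+1)² = H⁽²⁾(k+1) + 2 ∑_{j ≤ k} H(j)/(j+1)` and interchanging summations turns the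
series into `ζ(2,2) + 2 ζ(2,1,1)`, where `ζ(2,2) = ∑_{i<j} 1/(i²j²) = (ζ(2)² - ζ(4))/2` by symmetry.

For `ζ(2,1,1) = ∑_j H(j-1)/j · ∑_{n>j} 1/n² = ζ(4)`, split `S = ∑_a H(a)²/a²`, which is finite since
`H(a) = O(log a)`, using `H(a)/a = ∑_b 1/(b(a+b))` and `1/(ab(a+b)) = 1/(b(a+b)²) + 1/(a(a+b)²)`:
`S = ∑_{a,b} H(a)/(b(a+b)²) + ∑_a H(a)/a · ∑_{n>a} 1/n²`. Grouping the double series by `N = a+b`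
and using the convolution identity `∑_{a+b=N} H(a)/b = H(N)² - H⁽²⁾(N)` shows that it is also
`S - ∑_N H⁽²⁾(N)/N²`. Hence `∑_a H(a)/a · ∑_{n>a} 1/n² = ∑_N H⁽²⁾(N)/N² = ζ(2,2) + ζ(4)`, and
removing `ζ(2,2)` (from `H(a) = H(a-1) + 1/a`) leaves `ζ(2,1,1) = ζ(4)`.
-/

open Real Filter Finset Topology

theorem Hgen_eq_sum_range (p k : ℕ) : Hgen p k = ∑ j ∈ range k, 1 / ((j : ℝ) + 1) ^ p := by
  rw [Hgen, ← Ico_add_one_right_eq_Icc, ← zero_add 1, ← sum_Ico_add', range_eq_Ico]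
  push_cast
  rfl

theorem H_eq_Hgen_one (k : ℕ) : H k = Hgen 1 k := by
  simp [H, Hgen]

theorem H_eq_sum_range (k : ℕ) : H k = ∑ j ∈ range k, 1 / ((j : ℝ) + 1) := by
  simp [H_eq_Hgen_one, Hgen_eq_sum_range]

theorem H_succ (n : ℕ) : H (n + 1) = H n + 1 / ((n : ℝ) + 1) := by
  rw [H_eq_sum_range, H_eq_sum_range, sum_range_succ]

theorem Hgen_succ (p n : ℕ) : Hgen p (n + 1) = Hgen p n + 1 / ((n : ℝ) + 1) ^ p := by
  rw [Hgen_eq_sum_range, Hgen_eq_sum_range, sum_range_succ]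

theorem Hgen_zero (p : ℕ) : Hgen p 0 = 0 := by
  simp [Hgen]

theorem H_nonneg (k : ℕ) : 0 ≤ H k := sum_nonneg fun _ _ => by positivity

theorem Hgen_nonneg (p k : ℕ) : 0 ≤ Hgen p k := sum_nonneg fun _ _ => by positivity

theorem H_sq_eq_Hgen_two_add (n : ℕ) :
    H n ^ 2 = Hgen 2 n + 2 * ∑ j ∈ range n, H j / ((j : ℝ) + 1) := by
  induction n with
  | zero => simp [H, Hgen]
  | succ n ih =>
    rw [sum_range_succ, H_succ, Hgen_succ, mul_add, add_right_comm _ (1 / _), ← add_assoc, ← ih]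
    field_simp
    ring

theorem sum_antidiagonal_one_div_mul (n : ℕ) :
    ∑ p ∈ antidiagonal n, 1 / (((p.1 : ℝ) + 1) * ((p.2 : ℝ) + 1))
      = 2 * H (n + 1) / ((n : ℝ) + 2) := by
  have hsplit : ∀ p ∈ antidiagonal n, 1 / (((p.1 : ℝ) + 1) * ((p.2 : ℝ) + 1))
      = (1 / ((p.1 : ℝ) + 1) + 1 / ((p.2 : ℝ) + 1)) / ((n : ℝ) + 2) := by
    intro p hp
    have hn : (n : ℝ) = p.1 + p.2 := by exact_mod_cast (mem_antidiagonal.1 hp).symm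
    rw [hn]
    field_simp
    ring
  have hfst : ∑ p ∈ antidiagonal n, 1 / ((p.1 : ℝ) + 1) = H (n + 1) := by
    rw [Nat.sum_antidiagonal_eq_sum_range_succ_mk, H_eq_sum_range]
  have hsnd : ∑ p ∈ antidiagonal n, 1 / ((p.2 : ℝ) + 1) = H (n + 1) := by
    rw [← hfst, ← Nat.sum_antidiagonal_swap]
    rfl
  rw [sum_congr rfl hsplit, ← sum_div, sum_add_distrib, hfst, hsnd, two_mul]

theorem sum_antidiagonal_H_succ_div (q : ℕ) :
    ∑ p ∈ antidiagonal q, H (p.1 + 1) / ((p.2 : ℝ) + 1) = H (q + 2) ^ 2 - Hgen 2 (q + 2) := by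
  induction q with
  | zero => norm_num [H_eq_sum_range, Hgen_eq_sum_range, sum_range_succ]
  | succ q ih =>
    have hshift : ∑ p ∈ antidiagonal q, H (p.1 + 2) / ((p.2 : ℝ) + 1)
        = ∑ p ∈ antidiagonal q, H (p.1 + 1) / ((p.2 : ℝ) + 1)
          + ∑ p ∈ antidiagonal q, 1 / (((p.1 : ℝ) + 2) * ((p.2 : ℝ) + 1)) := by
      rw [← sum_add_distrib]
      refine sum_congr rfl fun p _ => ?_
      rw [H_succ]
      push_cast
      field_simp
      ring
    have hpairs : ∑ p ∈ antidiagonal q, 1 / (((p.1 : ℝ) + 2) * ((p.2 : ℝ) + 1))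
        = 2 * H (q + 2) / ((q : ℝ) + 3) - 1 / ((q : ℝ) + 2) := by
      have h := sum_antidiagonal_one_div_mul (q + 1)
      rw [Nat.sum_antidiagonal_succ] at h
      push_cast at h
      rw [eq_sub_iff_add_eq']
      convert h using 2 <;> ring_nf
    rw [Nat.sum_antidiagonal_succ, hshift, ih, hpairs, H_succ (q + 2), Hgen_succ 2 (q + 2),
      show H 1 = 1 by simp [H]]
    push_cast
    field_simp
    ring

theorem hasSum_sum_antidiagonal_of_nonneg {f : ℕ × ℕ → ℝ} (hf : 0 ≤ f) {g : ℕ → ℝ} {s : ℝ}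
    (hrow : ∀ i, HasSum (fun j => f (i, j)) (g i)) (hg : HasSum g s) :
    HasSum (fun k => ∑ p ∈ antidiagonal k, f p) s := by
  have hsum : Summable f := (summable_prod_of_nonneg hf).2
    ⟨fun i => (hrow i).summable, by simpa only [(hrow _).tsum_eq] using hg.summable⟩
  have hfs : HasSum f s := hg.unique (hsum.hasSum.prod_fiberwise hrow) ▸ hsum.hasSum
  refine ((HasAntidiagonal.sigmaAntidiagonalEquivProd (A := ℕ)).hasSum_iff.2 hfs).sigma fun k => ?_
  have hfin := hasSum_fintype fun p : antidiagonal k => f p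
  rwa [sum_coe_sort] at hfin

theorem hasSum_sub_add_of_antitone {f : ℕ → ℝ} (hf : Antitone f) (hlim : Tendsto f atTop (𝓝 0))
    (k : ℕ) : HasSum (fun n => f n - f (n + k)) (∑ i ∈ range k, f i) := by
  rw [hasSum_iff_tendsto_nat_of_nonneg fun n => sub_nonneg.2 (hf (Nat.le_add_right n k))]
  have hpartial : ∀ N, ∑ n ∈ range N, (f n - f (n + k))
      = ∑ i ∈ range k, f i - ∑ i ∈ range k, f (N + i) := by
    intro N
    have h₁ := sum_range_add f N k
    have h₂ := sum_range_add f k N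
    rw [add_comm k N] at h₂
    simp only [sum_sub_distrib, add_comm _ k]
    linarith
  have htail : Tendsto (fun N => ∑ i ∈ range k, f (N + i)) atTop (𝓝 0) := by
    simpa using tendsto_finsetSum (range k) fun i _ => hlim.comp (tendsto_add_atTop_nat i)
  simpa only [hpartial, sub_zero] using tendsto_const_nhds.sub htail

theorem hasSum_zeta_two_tail (m : ℕ) :
    HasSum (fun n : ℕ => 1 / ((m : ℝ) + n + 1) ^ 2) (π ^ 2 / 6 - Hgen 2 m) := by
  have h := (hasSum_nat_add_iff' (m + 1)).2 hasSum_zeta_two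
  rw [sum_range_succ'] at h
  rw [Hgen_eq_sum_range]
  push_cast at h
  simp only [div_zero, zero_pow two_ne_zero, add_zero] at h
  refine h.congr_fun fun n => ?_
  ring_nf

theorem hasSum_zeta_two_succ : HasSum (fun n : ℕ => 1 / ((n : ℝ) + 1) ^ 2) (π ^ 2 / 6) := by
  simpa using (hasSum_nat_add_iff' 1).2 hasSum_zeta_two

theorem hasSum_zeta_four_succ : HasSum (fun n : ℕ => 1 / ((n : ℝ) + 1) ^ 4) (π ^ 4 / 90) := by
  simpa using (hasSum_nat_add_iff' 1).2 hasSum_zeta_four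

theorem zeta_two_tail_nonneg (m : ℕ) : 0 ≤ π ^ 2 / 6 - Hgen 2 m :=
  (hasSum_zeta_two_tail m).nonneg fun _ => by positivity

theorem hasSum_one_div_mul_add (m : ℕ) :
    HasSum (fun n : ℕ => 1 / (((n : ℝ) + 1) * ((n : ℝ) + m + 2))) (H (m + 1) / ((m : ℝ) + 1)) := by
  have hanti : Antitone fun n : ℕ => 1 / ((n : ℝ) + 1) := fun a b hab => by
    dsimp only
    gcongr
  have h := (hasSum_sub_add_of_antitone hanti tendsto_one_div_add_atTop_nhds_zero_nat
    (m + 1)).div_const ((m : ℝ) + 1)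
  rw [← H_eq_sum_range] at h
  refine h.congr_fun fun n => ?_
  push_cast
  field_simp
  ring

theorem hasSum_one_div_mul_add_sq (m : ℕ) :
    HasSum (fun n : ℕ => 1 / (((n : ℝ) + 1) * ((n : ℝ) + m + 2) ^ 2))
      (H (m + 1) / ((m : ℝ) + 1) ^ 2 - (π ^ 2 / 6 - Hgen 2 (m + 1)) / ((m : ℝ) + 1)) := by
  have h := ((hasSum_one_div_mul_add m).sub (hasSum_zeta_two_tail (m + 1))).div_const ((m : ℝ) + 1)
  rw [show H (m + 1) / ((m : ℝ) + 1) ^ 2 - (π ^ 2 / 6 - Hgen 2 (m + 1)) / ((m : ℝ) + 1)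
      = (H (m + 1) / ((m : ℝ) + 1) - (π ^ 2 / 6 - Hgen 2 (m + 1))) / ((m : ℝ) + 1) by
    rw [sub_div _ (π ^ 2 / 6 - _), div_div, ← sq]]
  refine h.congr_fun fun n => ?_
  push_cast
  field_simp
  ring

theorem H_eq_harmonic (k : ℕ) : H k = harmonic k := by
  simp [H, harmonic_eq_sum_Icc]

theorem H_succ_le_rpow (n : ℕ) : H (n + 1) ≤ 5 * ((n : ℝ) + 1) ^ (1 / 4 : ℝ) := by
  have hx : (1 : ℝ) ≤ (n : ℝ) + 1 := by simp
  have hlog : H (n + 1) ≤ 1 + log ((n : ℝ) + 1) := by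
    simpa [H_eq_harmonic] using harmonic_le_one_add_log (n + 1)
  have hpow := log_le_rpow_div (by positivity : (0 : ℝ) ≤ (n : ℝ) + 1)
    (by norm_num : (0 : ℝ) < 1 / 4)
  have hone := one_le_rpow hx (by norm_num : (0 : ℝ) ≤ 1 / 4)
  linarith

theorem summable_H_succ_sq_div_sq : Summable fun n : ℕ => H (n + 1) ^ 2 / ((n : ℝ) + 1) ^ 2 := by
  refine Summable.of_nonneg_of_le (fun n => by positivity) (fun n => ?_)
    (((Real.summable_one_div_nat_add_rpow 1 (3 / 2)).2 (by norm_num)).mul_left 25)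
  have hx : (0 : ℝ) < (n : ℝ) + 1 := by positivity
  rw [abs_of_pos hx]
  calc H (n + 1) ^ 2 / ((n : ℝ) + 1) ^ 2
      ≤ (5 * ((n : ℝ) + 1) ^ (1 / 4 : ℝ)) ^ 2 / ((n : ℝ) + 1) ^ 2 := by
        gcongr
        exacts [H_nonneg _, H_succ_le_rpow n]
    _ = 25 * (1 / ((n : ℝ) + 1) ^ (3 / 2 : ℝ)) := by
        have hsplit : ((n : ℝ) + 1) ^ 2
            = (((n : ℝ) + 1) ^ (1 / 4 : ℝ)) ^ 2 * ((n : ℝ) + 1) ^ (3 / 2 : ℝ) := by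
          rw [← rpow_natCast, ← rpow_natCast, ← rpow_mul hx.le, ← rpow_add hx]
          norm_num
        rw [hsplit]
        field_simp
        norm_num

theorem hasSum_sum_range_div_add_two_sq {c : ℕ → ℝ} (hc : 0 ≤ c) {s : ℝ}
    (h : HasSum (fun j => c j * (π ^ 2 / 6 - Hgen 2 (j + 1))) s) :
    HasSum (fun k => (∑ j ∈ range (k + 1), c j) / ((k : ℝ) + 2) ^ 2) s := by
  have hrow : ∀ j, HasSum (fun n : ℕ => c j / ((j : ℝ) + n + 2) ^ 2)
      (c j * (π ^ 2 / 6 - Hgen 2 (j + 1))) := fun j =>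
    ((hasSum_zeta_two_tail (j + 1)).mul_left (c j)).congr_fun fun n => by
      push_cast
      ring
  refine (hasSum_sum_antidiagonal_of_nonneg (f := fun p => c p.1 / ((p.1 : ℝ) + p.2 + 2) ^ 2)
    (fun p => div_nonneg (hc p.1) (by positivity)) hrow h).congr_fun fun k => ?_
  have hk : ∀ p ∈ antidiagonal k,
      c p.1 / ((p.1 : ℝ) + p.2 + 2) ^ 2 = c p.1 / ((k : ℝ) + 2) ^ 2 := by
    intro p hp
    rw [← mem_antidiagonal.1 hp]
    push_cast
    rfl
  rw [sum_congr rfl hk, ← sum_div, Nat.sum_antidiagonal_eq_sum_range_succ_mk]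

theorem hasSum_H_sq_sub_Hgen_div_sq {C : ℝ}
    (h : HasSum (fun m => H (m + 1) *
      (H (m + 1) / ((m : ℝ) + 1) ^ 2 - (π ^ 2 / 6 - Hgen 2 (m + 1)) / ((m : ℝ) + 1))) C) :
    HasSum (fun q => (H (q + 2) ^ 2 - Hgen 2 (q + 2)) / ((q : ℝ) + 2) ^ 2) C := by
  have hrow : ∀ m, HasSum (fun n : ℕ => H (m + 1) / (((n : ℝ) + 1) * ((n : ℝ) + m + 2) ^ 2))
      (H (m + 1) *
        (H (m + 1) / ((m : ℝ) + 1) ^ 2 - (π ^ 2 / 6 - Hgen 2 (m + 1)) / ((m : ℝ) + 1))) :=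
    fun m => ((hasSum_one_div_mul_add_sq m).mul_left (H (m + 1))).congr_fun fun n => by ring
  refine (hasSum_sum_antidiagonal_of_nonneg
    (f := fun p => H (p.1 + 1) / (((p.2 : ℝ) + 1) * ((p.2 : ℝ) + p.1 + 2) ^ 2))
    (fun p => div_nonneg (H_nonneg _) (by positivity)) hrow h).congr_fun fun q => ?_
  rw [← sum_antidiagonal_H_succ_div, sum_div]
  refine sum_congr rfl fun p hp => ?_
  rw [← mem_antidiagonal.1 hp, div_div]
  push_cast
  ring

theorem hasSum_H_div_mul_zeta_two_tail_of_hasSum {a : ℝ}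
    (h : HasSum (fun m => Hgen 2 (m + 1) / ((m : ℝ) + 1) ^ 2) a) :
    HasSum (fun m => H (m + 1) / ((m : ℝ) + 1) * (π ^ 2 / 6 - Hgen 2 (m + 1))) a := by
  set c := fun m : ℕ => H (m + 1) *
    (H (m + 1) / ((m : ℝ) + 1) ^ 2 - (π ^ 2 / 6 - Hgen 2 (m + 1)) / ((m : ℝ) + 1))
  set e := fun m : ℕ => H (m + 1) / ((m : ℝ) + 1) * (π ^ 2 / 6 - Hgen 2 (m + 1))
  have hsplit : ∀ m, H (m + 1) ^ 2 / ((m : ℝ) + 1) ^ 2 = c m + e m := fun m => by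
    simp only [c, e]
    field_simp
    ring
  have hc_nonneg : 0 ≤ c := fun m =>
    mul_nonneg (H_nonneg _) ((hasSum_one_div_mul_add_sq m).nonneg fun n => by positivity)
  have he_nonneg : 0 ≤ e := fun m =>
    mul_nonneg (div_nonneg (H_nonneg _) (by positivity)) (zeta_two_tail_nonneg _)
  have hc : Summable c := summable_H_succ_sq_div_sq.of_nonneg_of_le hc_nonneg fun m => by
    rw [hsplit]
    exact le_add_of_nonneg_right (he_nonneg m)
  obtain ⟨S, hS⟩ := summable_H_succ_sq_div_sq
  have hE : HasSum e (S - ∑' m, c m) :=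
    (hS.sub hc.hasSum).congr_fun fun m => by rw [hsplit]; ring
  have hG : HasSum (fun m => Hgen 2 (m + 1) / ((m : ℝ) + 1) ^ 2) (S - ∑' m, c m) := by
    have hS' := ((hasSum_nat_add_iff' 1).2 hS).sub (hasSum_H_sq_sub_Hgen_div_sq hc.hasSum)
    rw [← hasSum_nat_add_iff' 1]
    convert hS' using 1
    · funext q
      push_cast
      ring_nf
    · simp [H, Hgen, sub_right_comm]
  exact h.unique hG ▸ hE

theorem hasSum_Hgen_succ_div_add_two_sq_of_hasSum {w : ℝ}
    (h : HasSum (fun j => (π ^ 2 / 6 - Hgen 2 (j + 1)) / ((j : ℝ) + 1) ^ 2) w) :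
    HasSum (fun k => Hgen 2 (k + 1) / ((k : ℝ) + 2) ^ 2) w := by
  have hc := hasSum_sum_range_div_add_two_sq (c := fun j => 1 / ((j : ℝ) + 1) ^ 2) (fun j => by positivity)
    (h.congr_fun fun j => by ring)
  simpa only [← Hgen_eq_sum_range] using hc

theorem hasSum_Hgen_div_succ_sq_of_hasSum {w : ℝ}
    (h : HasSum (fun j => (π ^ 2 / 6 - Hgen 2 (j + 1)) / ((j : ℝ) + 1) ^ 2) w) :
    HasSum (fun j => Hgen 2 j / ((j : ℝ) + 1) ^ 2) w := by
  rw [← hasSum_nat_add_iff' 1, sum_range_one, Hgen_zero, zero_div, sub_zero]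
  refine (hasSum_Hgen_succ_div_add_two_sq_of_hasSum h).congr_fun fun k => ?_
  push_cast
  ring

theorem hasSum_zeta_two_tail_div_sq :
    HasSum (fun j => (π ^ 2 / 6 - Hgen 2 (j + 1)) / ((j : ℝ) + 1) ^ 2) (π ^ 4 / 120) := by
  have hsum : HasSum (fun j => (π ^ 2 / 6 - Hgen 2 (j + 1)) / ((j : ℝ) + 1) ^ 2
      + Hgen 2 j / ((j : ℝ) + 1) ^ 2) (π ^ 2 / 6 * (π ^ 2 / 6) - π ^ 4 / 90) := by
    refine ((hasSum_zeta_two_succ.mul_left (π ^ 2 / 6)).sub hasSum_zeta_four_succ).congr_fun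
      fun j => ?_
    rw [Hgen_succ]
    field_simp
    ring
  have hW : Summable fun j => (π ^ 2 / 6 - Hgen 2 (j + 1)) / ((j : ℝ) + 1) ^ 2 :=
    hsum.summable.of_nonneg_of_le (fun j => div_nonneg (zeta_two_tail_nonneg _) (by positivity))
      fun j => le_add_of_nonneg_right (div_nonneg (Hgen_nonneg 2 j) (by positivity))
  have htwice := hsum.unique (hW.hasSum.add (hasSum_Hgen_div_succ_sq_of_hasSum hW.hasSum))
  convert hW.hasSum using 1
  linarith

theorem hasSum_H_div_mul_zeta_two_tail :
    HasSum (fun j => H j / ((j : ℝ) + 1) * (π ^ 2 / 6 - Hgen 2 (j + 1))) (π ^ 4 / 90) := by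
  have hGE : HasSum (fun m => Hgen 2 (m + 1) / ((m : ℝ) + 1) ^ 2) (π ^ 4 / 120 + π ^ 4 / 90) :=
    ((hasSum_Hgen_div_succ_sq_of_hasSum hasSum_zeta_two_tail_div_sq).add
      hasSum_zeta_four_succ).congr_fun fun m => by
        rw [Hgen_succ]
        field_simp
  have h := (hasSum_H_div_mul_zeta_two_tail_of_hasSum hGE).sub hasSum_zeta_two_tail_div_sq
  rw [add_sub_cancel_left] at h
  refine h.congr_fun fun j => ?_
  rw [H_succ]
  field_simp
  ring

theorem hasSum_H_succ_sq_div_add_two_sq :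
    HasSum (fun k => H (k + 1) ^ 2 / ((k : ℝ) + 2) ^ 2) (11 * π ^ 4 / 360) := by
  have hV := hasSum_Hgen_succ_div_add_two_sq_of_hasSum hasSum_zeta_two_tail_div_sq
  have hT := hasSum_sum_range_div_add_two_sq (c := fun j => H j / ((j : ℝ) + 1))
    (fun j => div_nonneg (H_nonneg j) (by positivity)) hasSum_H_div_mul_zeta_two_tail
  rw [show 11 * π ^ 4 / 360 = π ^ 4 / 120 + 2 * (π ^ 4 / 90) by ring]
  refine (hV.add (hT.mul_left 2)).congr_fun fun k => ?_
  rw [H_sq_eq_Hgen_two_add, add_div, mul_div_assoc]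

theorem euler_sum_11 :
    HasSum (fun k : ℕ => (H (k+1) : ℂ) ^ 2 / ((k : ℂ) + 2) ^ 2) (11 * riemannZeta 4 / 4) := by
  rw [riemannZeta_four, show (11 : ℂ) * (π ^ 4 / 90) / 4 = ((11 * π ^ 4 / 360 : ℝ) : ℂ) by
    push_cast; ring]
  exact (Complex.hasSum_ofReal.2 hasSum_H_succ_sq_div_add_two_sq).congr_fun fun k => by push_cast; rfl
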